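/- arXiv:1908.11188 — 6 statements merged into one kernel-verified Lean document; each statement's English description precedes it below -/
import Mathlib

section
/- Let E₀, E₁ be positive C² functions on an open set D ⊆ ℝ², t ∈ [0,1], and set E_t = E₀E₁/((1-t)E₁+tE₀). If Δ log E₀ = -K₀E₀² and Δ log E₁ = -K₁E₁² with K₀, K₁ > 0 pointwise, then Δ log E_t < 0 pointwise on D. (Equivalently, the harmonic-mean interpolation of conformal factors of two metrics of positive Gauss curvature again has positive Gauss curvature.) -/
/-!
Away from zeros, `log E_t = log E₀ + log E₁ - log W` with `W = (1 - t) E₁ + t E₀`. For a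
combination `W = a u₀ + b u₁` of positive functions with `a, b ≥ 0`, along any line
`(log W)'' = λ (log u₀)'' + μ (log u₁)'' + λ μ (u₀'/u₀ - u₁'/u₁)²`, where the weights
`λ = a u₀ / W` and `μ = b u₁ / W` sum to `1`. Taking `u₀ = E₁`, `u₁ = E₀`, `a = 1 - t`, `b = t`
and summing over the two coordinate directions gives `Δ log E_t ≤ λ Δ log E₀ + μ Δ log E₁`, a
convex combination of the negative numbers `-Kᵢ Eᵢ²`.
-/

/-- The Euclidean Laplacian of a function on `ℝ × ℝ`, written with iterated
one-dimensional derivatives. -/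
noncomputable def lap (f : ℝ × ℝ → ℝ) (p : ℝ × ℝ) : ℝ :=
  deriv (fun x => deriv (fun x' => f (x', p.2)) x) p.1 +
  deriv (fun y => deriv (fun y' => f (p.1, y')) y) p.2

open Real Filter Topology

theorem lap_eq_iteratedDeriv_two (f : ℝ × ℝ → ℝ) (p : ℝ × ℝ) :
    lap f p = iteratedDeriv 2 (fun x => f (x, p.2)) p.1 +
      iteratedDeriv 2 (fun y => f (p.1, y)) p.2 := by
  simp only [lap, iteratedDeriv_succ, iteratedDeriv_zero]

theorem iteratedDeriv_two_log {f : ℝ → ℝ} {x : ℝ} (hf : ContDiffAt ℝ 2 f x) (hx : f x ≠ 0) :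
    iteratedDeriv 2 (fun y => log (f y)) x =
      iteratedDeriv 2 f x / f x - (deriv f x / f x) ^ 2 := by
  have hderiv : deriv (fun y => log (f y)) =ᶠ[𝓝 x] fun y => deriv f y / f y := by
    filter_upwards [hf.eventually (by simp), hf.continuousAt.eventually_ne hx] with y hy hy0
    exact deriv.log (hy.differentiableAt two_ne_zero) hy0
  have hf' : HasDerivAt (deriv f) (iteratedDeriv 2 f x) x := by
    rw [iteratedDeriv_succ, iteratedDeriv_one]
    exact ((hf.derivWithin (m := 1) le_rfl).differentiableAt one_ne_zero).hasDerivAt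
  rw [iteratedDeriv_succ, iteratedDeriv_one, hderiv.deriv_eq,
    (hf'.fun_div (hf.differentiableAt two_ne_zero).hasDerivAt hx).deriv]
  field_simp

theorem one_sub_mul_add_mul_pos {A B t : ℝ} (hA : 0 < A) (hB : 0 < B) (ht₀ : 0 ≤ t)
    (ht₁ : t ≤ 1) : 0 < (1 - t) * A + t * B := by
  simpa using convex_Ioi (0 : ℝ) hA hB (sub_nonneg.2 ht₁) ht₀ (sub_add_cancel 1 t)

theorem weighted_iteratedDeriv_two_log_le {u₀ u₁ : ℝ → ℝ} {x a b : ℝ}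
    (hu₀ : ContDiffAt ℝ 2 u₀ x) (hu₁ : ContDiffAt ℝ 2 u₁ x)
    (hu₀pos : 0 < u₀ x) (hu₁pos : 0 < u₁ x) (ha : 0 ≤ a) (hb : 0 ≤ b)
    (hw : 0 < a * u₀ x + b * u₁ x) :
    a * u₀ x / (a * u₀ x + b * u₁ x) * iteratedDeriv 2 (fun y => log (u₀ y)) x +
      b * u₁ x / (a * u₀ x + b * u₁ x) * iteratedDeriv 2 (fun y => log (u₁ y)) x ≤
      iteratedDeriv 2 (fun y => log (a * u₀ y + b * u₁ y)) x := by
  have hcomb : ContDiffAt ℝ 2 (fun y => a * u₀ y + b * u₁ y) x :=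
    (contDiffAt_const.mul hu₀).add (contDiffAt_const.mul hu₁)
  have hcomb'' : iteratedDeriv 2 (fun y => a * u₀ y + b * u₁ y) x =
      a * iteratedDeriv 2 u₀ x + b * iteratedDeriv 2 u₁ x := by
    rw [iteratedDeriv_fun_add (contDiffAt_const.mul hu₀) (contDiffAt_const.mul hu₁),
      iteratedDeriv_const_mul a hu₀, iteratedDeriv_const_mul b hu₁]
  have hcomb' : deriv (fun y => a * u₀ y + b * u₁ y) x = a * deriv u₀ x + b * deriv u₁ x :=
    (((hu₀.differentiableAt two_ne_zero).hasDerivAt.const_mul a).add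
      ((hu₁.differentiableAt two_ne_zero).hasDerivAt.const_mul b)).deriv
  rw [iteratedDeriv_two_log hu₀ hu₀pos.ne', iteratedDeriv_two_log hu₁ hu₁pos.ne',
    iteratedDeriv_two_log hcomb hw.ne', hcomb', hcomb'']
  set w := a * u₀ x + b * u₁ x
  have hdefect : (a * iteratedDeriv 2 u₀ x + b * iteratedDeriv 2 u₁ x) / w -
        ((a * deriv u₀ x + b * deriv u₁ x) / w) ^ 2 -
      (a * u₀ x / w * (iteratedDeriv 2 u₀ x / u₀ x - (deriv u₀ x / u₀ x) ^ 2) +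
        b * u₁ x / w * (iteratedDeriv 2 u₁ x / u₁ x - (deriv u₁ x / u₁ x) ^ 2)) =
      a * u₀ x / w * (b * u₁ x / w) * (deriv u₀ x / u₀ x - deriv u₁ x / u₁ x) ^ 2 := by
    field_simp
    ring
  rw [← sub_nonneg, hdefect]
  positivity

theorem iteratedDeriv_two_log_interpolation_le {h₀ h₁ : ℝ → ℝ} {x t : ℝ}
    (hh₀ : ContDiffAt ℝ 2 h₀ x) (hh₁ : ContDiffAt ℝ 2 h₁ x)
    (hh₀pos : 0 < h₀ x) (hh₁pos : 0 < h₁ x) (ht₀ : 0 ≤ t) (ht₁ : t ≤ 1) :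
    iteratedDeriv 2 (fun y => log (h₀ y * h₁ y / ((1 - t) * h₁ y + t * h₀ y))) x ≤
      (1 - t) * h₁ x / ((1 - t) * h₁ x + t * h₀ x) * iteratedDeriv 2 (fun y => log (h₀ y)) x +
      t * h₀ x / ((1 - t) * h₁ x + t * h₀ x) * iteratedDeriv 2 (fun y => log (h₁ y)) x := by
  have hw : 0 < (1 - t) * h₁ x + t * h₀ x := one_sub_mul_add_mul_pos hh₁pos hh₀pos ht₀ ht₁
  have hsplit : (fun y => log (h₀ y * h₁ y / ((1 - t) * h₁ y + t * h₀ y))) =ᶠ[𝓝 x]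
      fun y => log (h₀ y) + log (h₁ y) - log ((1 - t) * h₁ y + t * h₀ y) := by
    filter_upwards [continuousAt_const.eventually_lt hh₀.continuousAt hh₀pos,
      continuousAt_const.eventually_lt hh₁.continuousAt hh₁pos] with y hy₀ hy₁
    rw [log_div (by positivity) (one_sub_mul_add_mul_pos hy₁ hy₀ ht₀ ht₁).ne',
      log_mul hy₀.ne' hy₁.ne']
  have hlog₀ := hh₀.log hh₀pos.ne'
  have hlog₁ := hh₁.log hh₁pos.ne'
  have hlogw := ((contDiffAt_const.mul hh₁).add (contDiffAt_const.mul hh₀)).log hw.ne'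
  rw [hsplit.iteratedDeriv_eq 2, iteratedDeriv_fun_sub (hlog₀.add hlog₁) hlogw,
    iteratedDeriv_fun_add hlog₀ hlog₁]
  have hweights : (1 - t) * h₁ x / ((1 - t) * h₁ x + t * h₀ x) +
      t * h₀ x / ((1 - t) * h₁ x + t * h₀ x) = 1 := by
    field_simp
  have hw_ge := weighted_iteratedDeriv_two_log_le hh₁ hh₀ hh₁pos hh₀pos (sub_nonneg.2 ht₁) ht₀ hw
  linear_combination hw_ge - (iteratedDeriv 2 (fun y => log (h₀ y)) x +
    iteratedDeriv 2 (fun y => log (h₁ y)) x) * hweights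

theorem lap_log_interpolation_le {E₀ E₁ : ℝ × ℝ → ℝ} {p : ℝ × ℝ} {t : ℝ}
    (hE₀ : ContDiffAt ℝ 2 E₀ p) (hE₁ : ContDiffAt ℝ 2 E₁ p)
    (hE₀pos : 0 < E₀ p) (hE₁pos : 0 < E₁ p) (ht₀ : 0 ≤ t) (ht₁ : t ≤ 1) :
    lap (fun q => log (E₀ q * E₁ q / ((1 - t) * E₁ q + t * E₀ q))) p ≤
      (1 - t) * E₁ p / ((1 - t) * E₁ p + t * E₀ p) * lap (fun q => log (E₀ q)) p +
      t * E₀ p / ((1 - t) * E₁ p + t * E₀ p) * lap (fun q => log (E₁ q)) p := by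
  have hfst {E : ℝ × ℝ → ℝ} (hE : ContDiffAt ℝ 2 E p) :
      ContDiffAt ℝ 2 (fun x => E (x, p.2)) p.1 :=
    hE.comp p.1 (contDiff_id.prodMk contDiff_const).contDiffAt
  have hsnd {E : ℝ × ℝ → ℝ} (hE : ContDiffAt ℝ 2 E p) :
      ContDiffAt ℝ 2 (fun y => E (p.1, y)) p.2 :=
    hE.comp p.2 (contDiff_const.prodMk contDiff_id).contDiffAt
  have h₁ := iteratedDeriv_two_log_interpolation_le (hfst hE₀) (hfst hE₁) hE₀pos hE₁pos ht₀ ht₁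
  have h₂ := iteratedDeriv_two_log_interpolation_le (hsnd hE₀) (hsnd hE₁) hE₀pos hE₁pos ht₀ ht₁
  simp only [lap_eq_iteratedDeriv_two]
  linarith

/-- If `E₀, E₁` are positive `C²` functions on an open set `D ⊆ ℝ²`
with `Δ log Eᵢ = -Kᵢ Eᵢ²` for positive functions `Kᵢ`, then for `t ∈ [0,1]` the
interpolation `E_t = E₀E₁/((1-t)E₁ + tE₀)` satisfies `Δ log E_t < 0` on `D`
(i.e. the interpolated conformal metric again has positive Gauss curvature). -/
theorem laplacian_log_interpolation_neg
    (D : Set (ℝ × ℝ)) (hD : IsOpen D)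
    (E₀ E₁ K₀ K₁ : ℝ × ℝ → ℝ)
    (hE₀pos : ∀ p ∈ D, 0 < E₀ p) (hE₁pos : ∀ p ∈ D, 0 < E₁ p)
    (hE₀ : ContDiffOn ℝ 2 E₀ D) (hE₁ : ContDiffOn ℝ 2 E₁ D)
    (hK₀pos : ∀ p ∈ D, 0 < K₀ p) (hK₁pos : ∀ p ∈ D, 0 < K₁ p)
    (hlap₀ : ∀ p ∈ D, lap (fun q => Real.log (E₀ q)) p = -(K₀ p) * (E₀ p) ^ 2)
    (hlap₁ : ∀ p ∈ D, lap (fun q => Real.log (E₁ q)) p = -(K₁ p) * (E₁ p) ^ 2)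
    (t : ℝ) (ht : t ∈ Set.Icc (0 : ℝ) 1) :
    ∀ p ∈ D,
      lap (fun q => Real.log (E₀ q * E₁ q / ((1 - t) * E₁ q + t * E₀ q))) p < 0 := by
  intro p hp
  obtain ⟨ht₀, ht₁⟩ := ht
  have hE₀p := hE₀pos p hp
  have hE₁p := hE₁pos p hp
  have hw := one_sub_mul_add_mul_pos hE₁p hE₀p ht₀ ht₁
  have hKE := one_sub_mul_add_mul_pos (mul_pos (hK₀pos p hp) hE₀p) (mul_pos (hK₁pos p hp) hE₁p)
    ht₀ ht₁
  calc _ ≤ (1 - t) * E₁ p / ((1 - t) * E₁ p + t * E₀ p) * lap (fun q => log (E₀ q)) p +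
        t * E₀ p / ((1 - t) * E₁ p + t * E₀ p) * lap (fun q => log (E₁ q)) p :=
      lap_log_interpolation_le (hE₀.contDiffAt (hD.mem_nhds hp))
        (hE₁.contDiffAt (hD.mem_nhds hp)) hE₀p hE₁p ht₀ ht₁
    _ = -(E₀ p * E₁ p * ((1 - t) * (K₀ p * E₀ p) + t * (K₁ p * E₁ p))) /
        ((1 - t) * E₁ p + t * E₀ p) := by
      rw [hlap₀ p hp, hlap₁ p hp]
      field_simp
      ring
    _ < 0 := div_neg_of_neg_of_pos (neg_neg_of_pos (mul_pos (mul_pos hE₀p hE₁p) hKE)) hw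
end

section
/- Let ε̂, γ, c > 0 with γ ≥ 1, c ≥ 1, and let (y_i) be positive reals with y_i ≤ ε̂^i γ^{i-1} c^{i-1} ∏_{j=2}^{i}(4-6/j) for all 1 ≤ i < l. Then ∑_{i=1}^{l-1} y_i y_{l-i} ≤ ε̂^l γ^{l-2} c^{l-2} ∏_{j=2}^{l}(4-6/j). -/
/-!
Rewriting `∏_{j=2}^{i}(4 - 6/j)` as the Catalan number `C_{i-1}` (the factor `4 - 6/j` is the ratio
`C_{j-1}/C_{j-2}`), the hypothesis reads `y_i ≤ ε (εγc)^{i-1} C_{i-1}`. Each product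
`y_i y_{l-i}` is then at most `ε² (εγc)^{l-2} C_{i-1} C_{l-i-1}`, and summing over `i` the Catalan
recurrence `C_{l-1} = ∑ C_{i-1} C_{l-i-1}` gives exactly the claimed bound.
-/

open Finset

theorem succ_succ_mul_catalan_succ (n : ℕ) :
    (n + 2) * catalan (n + 1) = 2 * (2 * n + 1) * catalan n := by
  refine Nat.eq_of_mul_eq_mul_left n.succ_pos ?_
  calc (n + 1) * ((n + 2) * catalan (n + 1))
      = (n + 1) * (n + 1).centralBinom := by rw [← succ_mul_catalan_eq_centralBinom]
    _ = 2 * (2 * n + 1) * n.centralBinom := Nat.succ_mul_centralBinom_succ n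
    _ = (n + 1) * (2 * (2 * n + 1) * catalan n) := by
        rw [← succ_mul_catalan_eq_centralBinom]; ring

theorem prod_Icc_four_sub_six_div_eq_catalan (n : ℕ) :
    ∏ j ∈ Icc 2 (n + 1), (4 - 6 / (j : ℝ)) = catalan n := by
  induction n with
  | zero => simp
  | succ n ih =>
    rw [prod_Icc_succ_top (by omega), ih]
    have hrec : ((n : ℝ) + 2) * catalan (n + 1) = 2 * (2 * n + 1) * catalan n := by
      exact_mod_cast succ_succ_mul_catalan_succ n
    have hn : (n : ℝ) + 2 ≠ 0 := by positivity
    push_cast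
    field_simp
    linarith

theorem sum_Icc_one_eq_sum_antidiagonal {M : Type*} [AddCommMonoid M] (f : ℕ → ℕ → M) (n : ℕ) :
    ∑ i ∈ Icc 1 (n + 1), f i (n + 2 - i) = ∑ p ∈ antidiagonal n, f (p.1 + 1) (p.2 + 1) := by
  refine sum_bij' (fun i _ => (i - 1, n + 1 - i)) (fun p _ => p.1 + 1) ?_ ?_ ?_ ?_ ?_ <;>
    simp only [mem_Icc, HasAntidiagonal.mem_antidiagonal]
  all_goals intro i hi
  all_goals first | omega | (congr 1 <;> omega)

theorem sum_antidiagonal_mul_le_of_le_catalan {y : ℕ → ℝ} {a r : ℝ} {n : ℕ}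
    (hy : ∀ k ≤ n, 0 ≤ y (k + 1)) (hb : ∀ k ≤ n, y (k + 1) ≤ a * r ^ k * catalan k) :
    ∑ p ∈ antidiagonal n, y (p.1 + 1) * y (p.2 + 1) ≤ a ^ 2 * r ^ n * catalan (n + 1) := by
  rw [catalan_succ', Nat.cast_sum, mul_sum]
  refine sum_le_sum fun p hp => ?_
  rw [HasAntidiagonal.mem_antidiagonal] at hp
  have h1 := hb p.1 (by omega)
  have h2 := hb p.2 (by omega)
  calc y (p.1 + 1) * y (p.2 + 1)
      ≤ (a * r ^ p.1 * catalan p.1) * (a * r ^ p.2 * catalan p.2) :=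
        mul_le_mul h1 h2 (hy p.2 (by omega)) ((hy p.1 (by omega)).trans h1)
    _ = a ^ 2 * r ^ n * ↑(catalan p.1 * catalan p.2) := by
        rw [← hp, pow_add]; push_cast; ring

theorem recursive_catalan_estimate_general
    (ε γ c : ℝ)
    (l : ℕ) (hl : 2 ≤ l) (y : ℕ → ℝ) (hy : ∀ i, 0 < y i)
    (hb : ∀ i, 1 ≤ i → i < l →
      y i ≤ ε ^ i * γ ^ (i - 1) * c ^ (i - 1) * ∏ j ∈ Finset.Icc 2 i, (4 - 6 / (j : ℝ))) :
    ∑ i ∈ Finset.Icc 1 (l - 1), y i * y (l - i) ≤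
      ε ^ l * γ ^ (l - 2) * c ^ (l - 2) * ∏ j ∈ Finset.Icc 2 l, (4 - 6 / (j : ℝ)) := by
  obtain ⟨n, rfl⟩ : ∃ n, l = n + 2 := ⟨l - 2, by omega⟩
  have hcatalan : ∀ k ≤ n, y (k + 1) ≤ ε * (ε * γ * c) ^ k * catalan k := by
    intro k hk
    convert hb (k + 1) (by omega) (by omega) using 1
    rw [prod_Icc_four_sub_six_div_eq_catalan, Nat.add_sub_cancel]
    ring
  calc ∑ i ∈ Icc 1 (n + 1), y i * y (n + 2 - i)
      = ∑ p ∈ antidiagonal n, y (p.1 + 1) * y (p.2 + 1) :=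
        sum_Icc_one_eq_sum_antidiagonal (fun i j => y i * y j) n
    _ ≤ ε ^ 2 * (ε * γ * c) ^ n * catalan (n + 1) :=
        sum_antidiagonal_mul_le_of_le_catalan (fun k _ => (hy _).le) hcatalan
    _ = ε ^ (n + 2) * γ ^ (n + 2 - 2) * c ^ (n + 2 - 2) *
          ∏ j ∈ Icc 2 (n + 2), (4 - 6 / (j : ℝ)) := by
        rw [prod_Icc_four_sub_six_div_eq_catalan, Nat.add_sub_cancel]
        ring

/-- Recursive estimate via the Catalan recurrence. If positive reals
`y i` satisfy `y i ≤ ε̂^i γ^{i-1} c^{i-1} ∏_{j=2}^{i}(4-6/j)` for `1 ≤ i < l`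
(where `γ, c ≥ 1`, `ε̂ > 0`), then
`∑_{i=1}^{l-1} y i y (l-i) ≤ ε̂^l γ^{l-2} c^{l-2} ∏_{j=2}^{l}(4-6/j)`. -/
theorem recursive_catalan_estimate
    (ε γ c : ℝ) (hε : 0 < ε) (hγ0 : 0 < γ) (hc0 : 0 < c)
    (hγ : 1 ≤ γ) (hc : 1 ≤ c)
    (l : ℕ) (hl : 2 ≤ l) (y : ℕ → ℝ) (hy : ∀ i, 0 < y i)
    (hb : ∀ i, 1 ≤ i → i < l →
      y i ≤ ε ^ i * γ ^ (i - 1) * c ^ (i - 1) * ∏ j ∈ Finset.Icc 2 i, (4 - 6 / (j : ℝ))) :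
    ∑ i ∈ Finset.Icc 1 (l - 1), y i * y (l - i) ≤
      ε ^ l * γ ^ (l - 2) * c ^ (l - 2) * ∏ j ∈ Finset.Icc 2 l, (4 - 6 / (j : ℝ)) :=
  recursive_catalan_estimate_general ε γ c l hl y hy hb
end

section
/- Let A be a symmetric positive definite 2×2 matrix with det A = K, trace A = H, and let à be another symmetric positive definite 2×2 matrix with det à = K. Then det(A - Ã) ≤ 0. -/
/-!
For `2 × 2` matrices `det (A - B) = det A + det B - tr (adj A * B)`, and the mixed term obeys
`a₀₀ b₀₀ tr (adj A * B) = b₀₀² det A + a₀₀² det B + (a₀₀ b₀₁ - b₀₀ a₀₁) (a₀₀ b₁₀ - b₀₀ a₁₀)`.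
For positive definite `A`, `B` the last product is a square, so AM–GM gives
`tr (adj A * B) ≥ 2 √(det A det B)`, i.e. `det (A - B) ≤ (√det A - √det B)²`, which vanishes
when the determinants agree.
-/

namespace Matrix

variable {R : Type*} [CommRing R]

theorem det_fin_two_add (A B : Matrix (Fin 2) (Fin 2) R) :
    (A + B).det = A.det + B.det + (A.adjugate * B).trace := by
  simp only [det_fin_two, adjugate_fin_two, trace_fin_two, add_apply, mul_apply, Fin.sum_univ_two,
    of_apply, cons_val', cons_val_zero, cons_val_one, empty_val', cons_val_fin_one]
  ring

theorem det_fin_two_sub (A B : Matrix (Fin 2) (Fin 2) R) :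
    (A - B).det = A.det + B.det - (A.adjugate * B).trace := by
  rw [sub_eq_add_neg, det_fin_two_add, det_neg, Matrix.mul_neg, trace_neg, ← sub_eq_add_neg]
  simp

theorem mul_mul_trace_adjugate_mul_fin_two (A B : Matrix (Fin 2) (Fin 2) R) :
    A 0 0 * B 0 0 * (A.adjugate * B).trace =
      B 0 0 ^ 2 * A.det + A 0 0 ^ 2 * B.det +
        (A 0 0 * B 0 1 - B 0 0 * A 0 1) * (A 0 0 * B 1 0 - B 0 0 * A 1 0) := by
  simp only [det_fin_two, adjugate_fin_two, trace_fin_two, mul_apply, Fin.sum_univ_two,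
    of_apply, cons_val', cons_val_zero, cons_val_one, empty_val', cons_val_fin_one]
  ring

theorem PosDef.two_mul_sqrt_det_mul_det_le_trace_adjugate_mul {A B : Matrix (Fin 2) (Fin 2) ℝ}
    (hA : A.PosDef) (hB : B.PosDef) :
    2 * √(A.det * B.det) ≤ (A.adjugate * B).trace := by
  have ha : 0 < A 0 0 := hA.diag_pos
  have hb : 0 < B 0 0 := hB.diag_pos
  have hA₁₀ : A 1 0 = A 0 1 := by simpa using hA.1.apply 0 1
  have hB₁₀ : B 1 0 = B 0 1 := by simpa using hB.1.apply 0 1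
  have am_gm : 2 * (A 0 0 * B 0 0) * √(A.det * B.det) ≤ B 0 0 ^ 2 * A.det + A 0 0 ^ 2 * B.det := by
    have h := two_mul_le_add_sq (B 0 0 * √A.det) (A 0 0 * √B.det)
    rw [mul_pow, mul_pow, Real.sq_sqrt hA.det_pos.le, Real.sq_sqrt hB.det_pos.le] at h
    rw [Real.sqrt_mul hA.det_pos.le]
    linarith
  refine le_of_mul_le_mul_left ?_ (mul_pos ha hb)
  rw [mul_mul_trace_adjugate_mul_fin_two, hA₁₀, hB₁₀]
  linarith [mul_self_nonneg (A 0 0 * B 0 1 - B 0 0 * A 0 1)]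

theorem PosDef.det_sub_le_sq_sqrt_det_sub_sqrt_det {A B : Matrix (Fin 2) (Fin 2) ℝ}
    (hA : A.PosDef) (hB : B.PosDef) :
    (A - B).det ≤ (√A.det - √B.det) ^ 2 := by
  have h := hA.two_mul_sqrt_det_mul_det_le_trace_adjugate_mul hB
  rw [Real.sqrt_mul hA.det_pos.le] at h
  rw [det_fin_two_sub, sub_sq, Real.sq_sqrt hA.det_pos.le, Real.sq_sqrt hB.det_pos.le]
  linarith

end Matrix

theorem det_sub_nonpos_of_posDef_eq_det_general
    (A A' : Matrix (Fin 2) (Fin 2) ℝ) (hA : A.PosDef) (hA' : A'.PosDef)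
    (K : ℝ) (hdetA : A.det = K) (hdetA' : A'.det = K) :
    (A - A').det ≤ 0 := by
  simpa [hdetA, hdetA'] using hA.det_sub_le_sq_sqrt_det_sub_sqrt_det hA'

/-- Two symmetric positive definite 2×2 matrices `A` (with `det A = K`,
`trace A = H`) and `A'` (with `det A' = K`) satisfy `det(A - A') ≤ 0`. -/
theorem det_sub_nonpos_of_posDef_eq_det
    (A A' : Matrix (Fin 2) (Fin 2) ℝ) (hA : A.PosDef) (hA' : A'.PosDef)
    (K H : ℝ) (hdetA : A.det = K) (htrA : A.trace = H) (hdetA' : A'.det = K) :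
    (A - A').det ≤ 0 :=
  det_sub_nonpos_of_posDef_eq_det_general A A' hA hA' K hdetA hdetA'
end

section
/- Let A be a symmetric positive definite 2×2 matrix field along the boundary (in Fermi coordinates as above) with A₁₂ = 0, mean curvature H = A₁₁/ζ² + A₂₂ and det A = Kζ² with K > 0. If ∂_t A₁₁ = -H and ∂_t(Kζ²) = ∂_tK - 2K (using ζ = 1, ∂_tζ = -1 at the boundary), then ∂_t H ≥ -Λ²H at the boundary, where Λ² = 3 + C(1 + 1/inf K) and C bounds |K| and |∂_tK|. -/
/-- Boundary mean-curvature estimate.  In Fermi coordinates at a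
boundary point (`ζ = 1`, `∂_tζ = -1`), for a positive definite diagonal second
fundamental form with entries `A₁₁, A₂₂ > 0`, mean curvature `H = A₁₁ + A₂₂`,
Gauss equation `K = A₁₁A₂₂` with `0 < infK ≤ K`, Codazzi equation
`∂_tA₁₁ = -H`, differentiated Gauss equation
`∂_tA₁₁·A₂₂ + A₁₁·∂_tA₂₂ = ∂_tK - 2K`, and
`∂_tH = -2A₁₁ + ∂_tA₁₁ + ∂_tA₂₂`, if `C` bounds `|K|` and `|∂_tK|`, then
`∂_tH ≥ -Λ²H` where `Λ² = 3 + C(1 + 1/infK)`. -/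
theorem boundary_mean_curvature_derivative_bound
    (A11 A22 A11' A22' K K' H H' C infK Λsq : ℝ)
    (hA11 : 0 < A11) (hA22 : 0 < A22)
    (hH : H = A11 + A22) (hK : K = A11 * A22)
    (hinfpos : 0 < infK) (hinf : infK ≤ K)
    (hCK : |K| ≤ C) (hCK' : |K'| ≤ C)
    (hcodazzi : A11' = -H)
    (hgauss' : A11' * A22 + A11 * A22' = K' - 2 * K)
    (hH' : H' = -2 * A11 + A11' + A22')
    (hA11H : A11 ≤ H) (hA22H : A22 ≤ H)
    (hΛ : Λsq = 3 + C * (1 + 1 / infK)) :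
    -Λsq * H ≤ H' := by
  have hHpos : 0 < H := by rw [hH]; positivity
  have hC0 : 0 ≤ C := le_trans (abs_nonneg K) hCK
  have hK'lb : -C ≤ K' := neg_le_of_abs_le hCK'
  have hd : infK ≤ H * A11 := by nlinarith
  have hq : C ≤ C / infK * (H * A11) := by
    have h1 : C / infK * infK ≤ C / infK * (H * A11) :=
      mul_le_mul_of_nonneg_left hd (by positivity)
    rwa [div_mul_cancel₀ C (ne_of_gt hinfpos)] at h1
  have hΛ' : Λsq = 3 + C + C / infK := by
    rw [hΛ]; field_simp; ring
  refine le_of_mul_le_mul_right ?_ hA11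
  -- H' * A11 expansion
  have hexp : A11 * A22' = K' - 2 * K + H * A22 := by
    rw [hcodazzi] at hgauss'; linarith
  have hHA : H' * A11 = -2 * A11 * A11 - H * A11 + (K' - 2 * K + H * A22) := by
    rw [hH', hcodazzi]; ring_nf; nlinarith [hexp]
  rw [hHA, hΛ']
  nlinarith [mul_pos hHpos hA22, mul_nonneg hC0 (mul_pos hHpos hA11).le]
end

section
/- For the Schwarzschild conformal factor φ(γ) = 1 + m/(2γ) with m > 0, the equation (1/(γ φ(γ)²))·(1 - m/(γφ(γ))) = 1 has exactly one solution γ > 0 when m = 3^{-3/2}, no solutions when m > 3^{-3/2}, and exactly two solutions when 0 < m < 3^{-3/2}. -/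
/-!
Clearing denominators, `k_h = 1` at `γ > 0` becomes `p_m(γ) = (γ + m/2)³ - γ² + (m/2)γ = 0`.
At every `γ ≥ 0` the value `p_m(γ)` increases strictly with `m`, and at the critical mass
`m = 1/√27` the cubic factors as `(γ - γ_c)² (γ + c)` with `c > 0`. So above the critical mass
`p_m > 0` on `γ > 0`, at it `γ_c` is the only root, and below it `p_m(γ_c) < 0 < p_m(0), p_m(1)`
gives two roots by the intermediate value theorem. There is no third one: three positive roots
would have product `-(m/2)³ < 0`.
-/

/-- The set of radii `γ > 0` at which the boundary circle of the spherical-cap disc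
in the spatial Schwarzschild manifold of mass `m` has geodesic curvature `1`,
where `φ(γ) = 1 + m/(2γ)` is the Schwarzschild conformal factor. -/
def schwarzschildRadii (m : ℝ) : Set ℝ :=
  {γ : ℝ | 0 < γ ∧
    (1 / (γ * (1 + m / (2 * γ)) ^ 2)) * (1 - m / (γ * (1 + m / (2 * γ)))) = 1}

open Real

noncomputable def schwarzschildCubic (m γ : ℝ) : ℝ := (γ + m / 2) ^ 3 - γ ^ 2 + m / 2 * γ

theorem continuous_schwarzschildCubic (m : ℝ) : Continuous (schwarzschildCubic m) := by
  unfold schwarzschildCubic; fun_prop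

theorem mem_schwarzschildRadii_iff {m γ : ℝ} (hm : 0 ≤ m) :
    γ ∈ schwarzschildRadii m ↔ 0 < γ ∧ schwarzschildCubic m γ = 0 := by
  refine and_congr_right fun hγ => ?_
  have hpos : 0 < γ + m / 2 := by positivity
  have hk : 1 / (γ * (1 + m / (2 * γ)) ^ 2) * (1 - m / (γ * (1 + m / (2 * γ)))) =
      γ * (γ - m / 2) / (γ + m / 2) ^ 3 := by
    field_simp
    ring
  rw [hk, div_eq_one_iff_eq (by positivity), schwarzschildCubic]
  constructor <;> intro h <;> linarith

/- Lagrange interpolation of the cubic at `x, y, z`, evaluated at `0`, multiplied by the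
Vandermonde determinant. -/
theorem mul_mul_eq_neg_of_cubic_eq_zero {b c d x y z : ℝ} (hxy : x ≠ y) (hxz : x ≠ z)
    (hyz : y ≠ z) (hx : x ^ 3 + b * x ^ 2 + c * x + d = 0)
    (hy : y ^ 3 + b * y ^ 2 + c * y + d = 0) (hz : z ^ 3 + b * z ^ 2 + c * z + d = 0) :
    x * y * z = -d := by
  have : ((x - y) * (x - z) * (y - z)) * (x * y * z + d) = 0 := by
    linear_combination (y * z * (y - z)) * hx - (x * z * (x - z)) * hy + (x * y * (x - y)) * hz
  have hV : (x - y) * (x - z) * (y - z) ≠ 0 := by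
    simp [sub_eq_zero, hxy, hxz, hyz]
  linear_combination (mul_eq_zero.mp this).resolve_left hV

theorem eq_or_eq_of_schwarzschildCubic_eq_zero {m x y z : ℝ} (hm : 0 < m) (hx : 0 < x)
    (hy : 0 < y) (hz : 0 < z) (hxy : x ≠ y) (hx₀ : schwarzschildCubic m x = 0)
    (hy₀ : schwarzschildCubic m y = 0) (hz₀ : schwarzschildCubic m z = 0) : z = x ∨ z = y := by
  by_contra! hne
  unfold schwarzschildCubic at hx₀ hy₀ hz₀
  have hprod := mul_mul_eq_neg_of_cubic_eq_zero (b := 3 * (m / 2) - 1)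
    (c := 3 * (m / 2) ^ 2 + m / 2) (d := (m / 2) ^ 3) hxy hne.1.symm hne.2.symm
    (by linear_combination hx₀) (by linear_combination hy₀) (by linear_combination hz₀)
  have : 0 < x * y * z := by positivity
  have : 0 < (m / 2) ^ 3 := by positivity
  linarith

theorem schwarzschildCubic_lt_schwarzschildCubic {m m' γ : ℝ} (hm : 0 ≤ m) (hmm' : m < m')
    (hγ : 0 ≤ γ) : schwarzschildCubic m γ < schwarzschildCubic m' γ := by
  have hcube : (γ + m / 2) ^ 3 < (γ + m' / 2) ^ 3 :=
    pow_lt_pow_left₀ (by linarith) (by positivity) three_ne_zero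
  have hlin : m / 2 * γ ≤ m' / 2 * γ := by gcongr
  unfold schwarzschildCubic
  linarith

/- The double root of `schwarzschildCubic` at the critical mass `1 / √27`. -/
noncomputable def schwarzschildCriticalRadius : ℝ := (3 + 2 * √3) / 18

theorem inv_sqrt_27 : (√27)⁻¹ = √3 / 9 := by
  rw [show (27 : ℝ) = 3 ^ 2 * 3 by norm_num, sqrt_mul (by positivity), sqrt_sq (by norm_num)]
  field_simp
  rw [sq_sqrt (by norm_num)]
  norm_num

theorem schwarzschildCubic_critical (γ : ℝ) :
    schwarzschildCubic (√27)⁻¹ γ =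
      (γ - schwarzschildCriticalRadius) ^ 2 * (γ + (7 * √3 - 12) / 18) := by
  have h3 : √3 ^ 2 = 3 := sq_sqrt (by norm_num)
  rw [schwarzschildCubic, schwarzschildCriticalRadius, inv_sqrt_27]
  linear_combination (γ / 12 - √3 / 216 - 1 / 162) * h3

theorem twelve_lt_seven_mul_sqrt_three : (12 : ℝ) < 7 * √3 := by
  nlinarith [sq_sqrt (show (0 : ℝ) ≤ 3 by norm_num), sqrt_nonneg 3]

theorem schwarzschildCubic_critical_nonneg {γ : ℝ} (hγ : 0 ≤ γ) :
    0 ≤ schwarzschildCubic (√27)⁻¹ γ := by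
  have := twelve_lt_seven_mul_sqrt_three
  rw [schwarzschildCubic_critical]
  have : 0 < γ + (7 * √3 - 12) / 18 := by linarith
  positivity

theorem schwarzschildCubic_critical_eq_zero_iff {γ : ℝ} (hγ : 0 ≤ γ) :
    schwarzschildCubic (√27)⁻¹ γ = 0 ↔ γ = schwarzschildCriticalRadius := by
  have := twelve_lt_seven_mul_sqrt_three
  have : γ + (7 * √3 - 12) / 18 ≠ 0 := by linarith
  rw [schwarzschildCubic_critical, mul_eq_zero, or_iff_left this, sq_eq_zero_iff, sub_eq_zero]

theorem schwarzschildCubic_critical_schwarzschildCriticalRadius :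
    schwarzschildCubic (√27)⁻¹ schwarzschildCriticalRadius = 0 := by
  rw [schwarzschildCubic_critical, sub_self]
  ring

theorem schwarzschildCriticalRadius_pos : 0 < schwarzschildCriticalRadius := by
  unfold schwarzschildCriticalRadius; positivity

theorem schwarzschildCriticalRadius_lt_one : schwarzschildCriticalRadius < 1 := by
  unfold schwarzschildCriticalRadius
  nlinarith [sq_sqrt (show (0 : ℝ) ≤ 3 by norm_num), sqrt_nonneg 3]

theorem exists_two_schwarzschildCubic_roots {m : ℝ} (hm : 0 < m) (hmc : m < (√27)⁻¹) :
    ∃ x y, 0 < x ∧ x < y ∧ schwarzschildCubic m x = 0 ∧ schwarzschildCubic m y = 0 := by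
  have h₀ : 0 < schwarzschildCubic m 0 := by
    rw [show schwarzschildCubic m 0 = (m / 2) ^ 3 by unfold schwarzschildCubic; ring]
    positivity
  have h₁ : 0 < schwarzschildCubic m 1 := by
    have : 1 ≤ (1 + m / 2) ^ 3 := one_le_pow₀ (by linarith)
    unfold schwarzschildCubic
    linarith
  have hcrit : schwarzschildCubic m schwarzschildCriticalRadius < 0 := by
    have := schwarzschildCubic_lt_schwarzschildCubic hm.le hmc schwarzschildCriticalRadius_pos.le
    rwa [schwarzschildCubic_critical_schwarzschildCriticalRadius] at this
  obtain ⟨x, ⟨hx₀, hxc⟩, hx⟩ :=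
    intermediate_value_Ioo' schwarzschildCriticalRadius_pos.le
      (continuous_schwarzschildCubic m).continuousOn ⟨hcrit, h₀⟩
  obtain ⟨y, ⟨hcy, -⟩, hy⟩ :=
    intermediate_value_Ioo schwarzschildCriticalRadius_lt_one.le
      (continuous_schwarzschildCubic m).continuousOn ⟨hcrit, h₁⟩
  exact ⟨x, y, hx₀, hxc.trans hcy, hx, hy⟩

theorem schwarzschildRadii_critical :
    schwarzschildRadii (√27)⁻¹ = {schwarzschildCriticalRadius} := by
  ext γ
  rw [mem_schwarzschildRadii_iff (by positivity), Set.mem_singleton_iff]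
  constructor
  · rintro ⟨hγ, h⟩
    exact (schwarzschildCubic_critical_eq_zero_iff hγ.le).1 h
  · rintro rfl
    exact ⟨schwarzschildCriticalRadius_pos, schwarzschildCubic_critical_schwarzschildCriticalRadius⟩

theorem schwarzschildRadii_eq_empty {m : ℝ} (hmc : (√27)⁻¹ < m) : schwarzschildRadii m = ∅ := by
  refine Set.eq_empty_of_forall_notMem fun γ hγ => ?_
  obtain ⟨hγ, h⟩ := (mem_schwarzschildRadii_iff ((inv_nonneg.2 (sqrt_nonneg _)).trans hmc.le)).1 hγ
  have := schwarzschildCubic_lt_schwarzschildCubic (by positivity) hmc hγ.le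
  linarith [schwarzschildCubic_critical_nonneg hγ.le]

theorem ncard_schwarzschildRadii {m : ℝ} (hm : 0 < m) (hmc : m < (√27)⁻¹) :
    (schwarzschildRadii m).ncard = 2 := by
  obtain ⟨x, y, hx, hxy, hx₀, hy₀⟩ := exists_two_schwarzschildCubic_roots hm hmc
  have hy := hx.trans hxy
  suffices schwarzschildRadii m = {x, y} by rw [this, Set.ncard_pair hxy.ne]
  ext γ
  rw [mem_schwarzschildRadii_iff hm.le]
  constructor
  · rintro ⟨hγ, h⟩
    exact eq_or_eq_of_schwarzschildCubic_eq_zero hm hx hy hγ hxy.ne hx₀ hy₀ h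
  · rintro (rfl | rfl)
    exacts [⟨hx, hx₀⟩, ⟨hy, hy₀⟩]

/-- The equation `k_h = 1` for the Schwarzschild conformal factor has
exactly one positive solution when `m = 3^{-3/2} = 1/√27`, none when
`m > 3^{-3/2}`, and exactly two when `0 < m < 3^{-3/2}`. -/
theorem schwarzschild_geodesic_curvature_solutions (m : ℝ) (hm : 0 < m) :
    (m = (Real.sqrt 27)⁻¹ → (schwarzschildRadii m).ncard = 1) ∧
    ((Real.sqrt 27)⁻¹ < m → schwarzschildRadii m = ∅) ∧
    (m < (Real.sqrt 27)⁻¹ → (schwarzschildRadii m).ncard = 2) :=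
  ⟨fun h => by rw [h, schwarzschildRadii_critical, Set.ncard_singleton],
    schwarzschildRadii_eq_empty, ncard_schwarzschildRadii hm⟩
end

section
/- Let A, Ã be symmetric positive semidefinite 2×2 matrices with det A = det Ã, trace A = H > 0, trace à = H̃ > 0, and suppose ∫(H - H̃) = 0 and ∫ det(A - Ã)·w = 0 for a weight w ≥ 0 positive a.e.; if A and à are positive definite then det(A - Ã) ≤ 0 pointwise, hence det(A - Ã) = 0 a.e. on {w > 0}. -/
open MeasureTheory

/-! For 2×2 matrices `det (A - B) = det A + det B - tr (A · adj B)`, and for positive definite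
`A, B` one has `tr (A · adj B) ≥ 2 √(det A · det B)`; hence equal determinants force
`det (A - B) ≤ 0`. A nonpositive function whose integral against a nonnegative weight vanishes
must vanish almost everywhere where the weight is positive. -/

namespace Matrix

theorem det_sub_fin_two {R : Type*} [CommRing R] (A B : Matrix (Fin 2) (Fin 2) R) :
    (A - B).det = A.det + B.det - (A * B.adjugate).trace := by
  simp only [det_fin_two, adjugate_fin_two, trace_fin_two, mul_apply, Fin.sum_univ_two, sub_apply,
    of_apply, cons_val', cons_val_zero, cons_val_one, empty_val', cons_val_fin_one]
  ring

theorem PosDef.fin_two_entries {A : Matrix (Fin 2) (Fin 2) ℝ} (hA : A.PosDef) :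
    A 1 0 = A 0 1 ∧ 0 < A 0 0 ∧ 0 < A 0 0 * A 1 1 - A 0 1 ^ 2 := by
  have hsymm : A 1 0 = A 0 1 := by simpa using congrFun₂ hA.isHermitian 0 1
  have hdiag : 0 < A 0 0 := by
    simpa [dotProduct, mulVec, Fin.sum_univ_two] using
      hA.dotProduct_mulVec_pos (x := Pi.single 0 1) (Pi.single_ne_zero_iff.mpr one_ne_zero)
  have hdet := hA.det_pos
  rw [det_fin_two, hsymm] at hdet
  exact ⟨hsymm, hdiag, by linarith⟩

theorem PosDef.two_mul_sqrt_det_mul_det_le_trace_mul_adjugate {A B : Matrix (Fin 2) (Fin 2) ℝ}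
    (hA : A.PosDef) (hB : B.PosDef) : 2 * √(A.det * B.det) ≤ (A * B.adjugate).trace := by
  obtain ⟨hA10, ha, hdA⟩ := hA.fin_two_entries
  obtain ⟨hB10, hp, hdB⟩ := hB.fin_two_entries
  have htrace : (A * B.adjugate).trace = A 0 0 * B 1 1 - 2 * A 0 1 * B 0 1 + A 1 1 * B 0 0 := by
    simp only [adjugate_fin_two, trace_fin_two, mul_apply, Fin.sum_univ_two, of_apply, cons_val',
      cons_val_zero, cons_val_one, empty_val', cons_val_fin_one, hA10, hB10]
    ring
  rw [det_fin_two, det_fin_two, hA10, hB10, htrace, ← sq, ← sq]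
  set a := A 0 0; set b := A 0 1; set c := A 1 1
  set p := B 0 0; set q := B 0 1; set r := B 1 1
  set T := a * r - 2 * b * q + c * p
  have hc : 0 < c := by nlinarith
  have hr : 0 < r := by nlinarith
  have hT : 0 ≤ T := by
    nlinarith [sq_nonneg (a * q - b * p), sq_nonneg (a * r - c * p), mul_pos ha hr, mul_pos hc hp]
  -- `det (A - t B)` is a quadratic in `t` with leading coefficient `det B > 0` which is
  -- `≤ 0` at `t = a / p`, where the top-left entry vanishes; so its discriminant is `≥ 0`.
  have hscaled : p ^ 2 * (T ^ 2 - 4 * ((a * c - b ^ 2) * (p * r - q ^ 2))) =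
      (2 * (p * r - q ^ 2) * a - T * p) ^ 2 + 4 * (p * r - q ^ 2) * (b * p - a * q) ^ 2 := by
    ring
  have hdisc : 0 ≤ T ^ 2 - 4 * ((a * c - b ^ 2) * (p * r - q ^ 2)) :=
    nonneg_of_mul_nonneg_right (by rw [hscaled]; positivity) (by positivity)
  rw [← pow_le_pow_iff_left₀ (by positivity) hT two_ne_zero, mul_pow,
    Real.sq_sqrt (mul_pos hdA hdB).le]
  linarith

theorem PosDef.det_sub_nonpos_of_det_eq {A B : Matrix (Fin 2) (Fin 2) ℝ} (hA : A.PosDef)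
    (hB : B.PosDef) (hdet : A.det = B.det) : (A - B).det ≤ 0 := by
  have := hA.two_mul_sqrt_det_mul_det_le_trace_mul_adjugate hB
  rw [← hdet, Real.sqrt_mul_self hA.det_pos.le] at this
  rw [det_sub_fin_two, ← hdet]
  linarith

end Matrix

theorem ae_imp_eq_zero_of_integral_mul_eq_zero {X : Type*} [MeasurableSpace X] {μ : Measure X}
    {f w : X → ℝ} (hf : f ≤ᵐ[μ] 0) (hw : 0 ≤ᵐ[μ] w) (hint : Integrable (fun x => f x * w x) μ)
    (hzero : ∫ x, f x * w x ∂μ = 0) : ∀ᵐ x ∂μ, 0 < w x → f x = 0 := by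
  have hnonneg : 0 ≤ᵐ[μ] fun x => -(f x * w x) := by
    filter_upwards [hf, hw] with x hfx hwx
    exact neg_nonneg.mpr (mul_nonpos_of_nonpos_of_nonneg hfx hwx)
  have hvanish := (integral_eq_zero_iff_of_nonneg_ae hnonneg hint.neg).mp
    (by rw [integral_neg, hzero, neg_zero])
  filter_upwards [hvanish] with x hx hwx
  exact (mul_eq_zero.mp (neg_eq_zero.mp hx)).resolve_right hwx.ne'

theorem det_diff_vanishes_ae_general
    {X : Type*} [MeasurableSpace X] (μ : Measure X)
    (A A' : X → Matrix (Fin 2) (Fin 2) ℝ)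
    (hA : ∀ x, (A x).PosDef) (hA' : ∀ x, (A' x).PosDef)
    (hdet : ∀ x, (A x).det = (A' x).det)
    (w : X → ℝ) (hw : ∀ x, 0 ≤ w x)
    (hint : Integrable (fun x => (A x - A' x).det * w x) μ)
    (hzero : ∫ x, (A x - A' x).det * w x ∂μ = 0) :
    (∀ x, (A x - A' x).det ≤ 0) ∧
    (∀ᵐ x ∂μ, 0 < w x → (A x - A' x).det = 0) := by
  have hle : ∀ x, (A x - A' x).det ≤ 0 := fun x =>
    (hA x).det_sub_nonpos_of_det_eq (hA' x) (hdet x)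
  exact ⟨hle, ae_imp_eq_zero_of_integral_mul_eq_zero (.of_forall hle) (.of_forall hw) hint hzero⟩

/-- Final step of the uniqueness proof.  Let `A, A'` be fields of
symmetric positive definite 2×2 matrices on a measure space with pointwise equal
determinants and positive traces `H, H'`, let `w ≥ 0` be a weight that is positive
almost everywhere, and suppose `∫ (H - H') = 0` and `∫ det(A - A')·w = 0` (with the
integrand integrable).  Then `det(A - A') ≤ 0` pointwise, and hence
`det(A - A') = 0` a.e. on `{w > 0}`. -/
theorem det_diff_vanishes_ae
    {X : Type*} [MeasurableSpace X] (μ : Measure X)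
    (A A' : X → Matrix (Fin 2) (Fin 2) ℝ)
    (hA : ∀ x, (A x).PosDef) (hA' : ∀ x, (A' x).PosDef)
    (hdet : ∀ x, (A x).det = (A' x).det)
    (H H' : X → ℝ)
    (hH : ∀ x, H x = (A x).trace) (hH' : ∀ x, H' x = (A' x).trace)
    (hHpos : ∀ x, 0 < H x) (hH'pos : ∀ x, 0 < H' x)
    (hHint : ∫ x, (H x - H' x) ∂μ = 0)
    (w : X → ℝ) (hw : ∀ x, 0 ≤ w x) (hwpos : ∀ᵐ x ∂μ, 0 < w x)
    (hint : Integrable (fun x => (A x - A' x).det * w x) μ)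
    (hzero : ∫ x, (A x - A' x).det * w x ∂μ = 0) :
    (∀ x, (A x - A' x).det ≤ 0) ∧
    (∀ᵐ x ∂μ, 0 < w x → (A x - A' x).det = 0) :=
  det_diff_vanishes_ae_general μ A A' hA hA' hdet w hw hint hzero
end
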